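/- Let G be the group with presentation ⟨x₁, x₂, μ | μ x₁ μ⁻¹ = x₁ x₂⁻¹, μ x₂⁻² x₁ μ⁻¹ = x₂⁻²⟩ (the Lin presentation of the 5₂ knot group) and let ζ₇ = exp(2π√−1/7). Then for each k ∈ {1, 2, 3} there exists a group homomorphism ρ_k: G → SL(2,ℂ) with ρ_k(x₁) = [[ζ₇^k,0],[0,ζ₇^{−k}]], ρ_k(x₂) = [[ζ₇^{2k},0],[0,ζ₇^{−2k}]], and ρ_k(μ) = J; each ρ_k is irreducible, and ρ₁, ρ₂, ρ₃ are pairwise non-conjugate in SL(2,ℂ). -/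

import Mathlib

open Matrix

abbrev SL2C := Matrix.SpecialLinearGroup (Fin 2) ℂ

/-- The relators of the Lin presentation
`⟨x₁, x₂, μ | μ x₁ μ⁻¹ = x₁ x₂⁻¹, μ x₂⁻² x₁ μ⁻¹ = x₂⁻²⟩` of the `5₂` knot group,
with `x₁, x₂, μ` the generators `0, 1, 2`. -/
def fiveTwoRels : Set (FreeGroup (Fin 3)) :=
  { (FreeGroup.of 2) * (FreeGroup.of 0) * (FreeGroup.of 2)⁻¹ *
      ((FreeGroup.of 0) * (FreeGroup.of 1)⁻¹)⁻¹,
    (FreeGroup.of 2) * ((FreeGroup.of 1) ^ (2 : ℕ))⁻¹ * (FreeGroup.of 0) *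
      (FreeGroup.of 2)⁻¹ * ((((FreeGroup.of 1) ^ (2 : ℕ))⁻¹)⁻¹) }

/-- The `5₂` knot group via its Lin presentation. -/
def FiveTwoGroup : Type := PresentedGroup fiveTwoRels

instance : Group FiveTwoGroup := by unfold FiveTwoGroup; infer_instance

/-!
On generators, `ρ_a` sends `x₁ ↦ diag(a, a⁻¹)`, `x₂ ↦ diag(a², a⁻²)`, `μ ↦ J`. Conjugation by `J`
inverts diagonal matrices, so the first relation holds for every `a` and the second one reduces
to `a³ = a⁻⁴`, i.e. `a⁷ = 1`. A line invariant under `diag(a, a⁻¹)` with `a ≠ a⁻¹` is a coordinate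
axis, and `J` swaps the two axes, so `ρ_a` is irreducible when `a² ≠ 1`. Finally the trace
`a + a⁻¹` of the image of `x₁` is a conjugacy invariant, and `x + x⁻¹ = y + y⁻¹` forces `x = y` or
`xy = 1`, which separates `ζ₇, ζ₇², ζ₇³`.
-/

open MatrixGroups

lemma add_inv_eq_add_inv_iff {K : Type*} [Field K] {x y : K} (hx : x ≠ 0) (hy : y ≠ 0) :
    x + x⁻¹ = y + y⁻¹ ↔ x = y ∨ x * y = 1 := by
  have key : x * y * (x + x⁻¹ - (y + y⁻¹)) = (x - y) * (x * y - 1) := by field_simp; ring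
  rw [← sub_eq_zero, ← mul_eq_zero_iff_left (mul_ne_zero hx hy), key, mul_eq_zero, sub_eq_zero,
    sub_eq_zero]

lemma IsPrimitiveRoot.pow_add_inv_pow_ne {K : Type*} [Field K] {ζ : K} {n j k : ℕ}
    (h : IsPrimitiveRoot ζ n) (hj : j < n) (hk : k < n) (hjk : j ≠ k) (hsum : ¬ n ∣ j + k) :
    ζ ^ j + (ζ ^ j)⁻¹ ≠ ζ ^ k + (ζ ^ k)⁻¹ := by
  have hζ : ζ ≠ 0 := h.ne_zero (by omega)
  rw [Ne, add_inv_eq_add_inv_iff (pow_ne_zero _ hζ) (pow_ne_zero _ hζ), ← pow_add,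
    h.pow_eq_one_iff_dvd]
  exact not_or_intro (fun h' => hjk (h.pow_inj hj hk h')) hsum

lemma Submodule.exists_common_eigenvector_of_finrank_eq_one {K n : Type*} [Field K] [Fintype n]
    {W : Submodule K (n → K)} (hW : Module.finrank K W = 1) :
    ∃ v ∈ W, v ≠ 0 ∧ ∀ M : Matrix n n K, (∀ w ∈ W, M *ᵥ w ∈ W) → ∃ c : K, M *ᵥ v = c • v := by
  obtain ⟨v, hv0, hv⟩ := finrank_eq_one_iff'.mp hW
  refine ⟨v, v.2, fun h => hv0 (Subtype.ext h), fun M hM => ?_⟩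
  obtain ⟨c, hc⟩ := hv ⟨M *ᵥ v, hM v v.2⟩
  exact ⟨c, congrArg Subtype.val hc.symm⟩

lemma eq_of_common_eigenvector_diag_quarterTurn {K : Type*} [Field K] {a b c d : K}
    {v : Fin 2 → K} (hv : v ≠ 0) (hdiag : !![a, 0; 0, b] *ᵥ v = c • v)
    (hquarter : !![0, 1; -1, 0] *ᵥ v = d • v) : a = b := by
  have ha : a * v 0 = c * v 0 := by simpa [vecHead, vecTail] using congrFun hdiag 0
  have hb : b * v 1 = c * v 1 := by simpa [vecHead, vecTail] using congrFun hdiag 1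
  have h10 : v 1 = d * v 0 := by simpa [vecHead, vecTail] using congrFun hquarter 0
  have h01 : -v 0 = d * v 1 := by simpa [vecHead, vecTail] using congrFun hquarter 1
  have hv0 : v 0 ≠ 0 := fun h0 => hv <| by
    ext i; fin_cases i <;> simp [h0, h10]
  have hv1 : v 1 ≠ 0 := fun h1 => hv0 <| by simpa [h1] using h01
  rw [mul_right_cancel₀ hv0 ha, mul_right_cancel₀ hv1 hb]

namespace Matrix.SpecialLinearGroup

section Field

variable {K : Type*} [Field K]

noncomputable def diagUnit : Kˣ →* SL(2, K) where
  toFun a := diag2 (a : K) a.ne_zero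
  map_one' := Subtype.ext <| by simp [diag2_coe', one_fin_two]
  map_mul' a b := Subtype.ext <| by simp [diag2_coe', mul_comm]

@[simp]
lemma coe_diagUnit (a : Kˣ) :
    (diagUnit a : Matrix (Fin 2) (Fin 2) K) = !![(a : K), 0; 0, (a : K)⁻¹] :=
  diag2_coe' a.ne_zero

end Field

variable {R : Type*} [CommRing R]

-- the matrix `J` of the paper
def quarterTurn : SL(2, R) := ⟨!![0, 1; -1, 0], by simp [det_fin_two_of]⟩

@[simp]
lemma coe_quarterTurn :
    ((quarterTurn : SL(2, R)) : Matrix (Fin 2) (Fin 2) R) = !![0, 1; -1, 0] := rfl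

lemma quarterTurn_mul_diagUnit_mul_quarterTurn_inv {K : Type*} [Field K] (a : Kˣ) :
    quarterTurn * diagUnit a * quarterTurn⁻¹ = diagUnit a⁻¹ := by
  ext i j
  fin_cases i <;> fin_cases j <;> simp [coe_inv, adjugate_fin_two_of]

lemma trace_coe_conj (P M : SL(2, R)) :
    trace ((P * M * P⁻¹ : SL(2, R)) : Matrix (Fin 2) (Fin 2) R) =
      trace (M : Matrix (Fin 2) (Fin 2) R) := by
  rw [coe_mul, coe_mul, trace_mul_cycle, ← coe_mul P⁻¹, inv_mul_cancel, coe_one, one_mul]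

end Matrix.SpecialLinearGroup

namespace FiveTwoGroup

open Matrix.SpecialLinearGroup

variable {K : Type*} [Field K]

noncomputable def generatorImages (a : Kˣ) : Fin 3 → SL(2, K) :=
  ![diagUnit a, diagUnit (a ^ 2), quarterTurn]

lemma lift_generatorImages_rels {a : Kˣ} (ha : a ^ 7 = 1) :
    ∀ r ∈ fiveTwoRels, FreeGroup.lift (generatorImages a) r = 1 := by
  rintro r (rfl | rfl) <;>
    simp only [map_mul, map_inv, map_pow, FreeGroup.lift_apply_of, generatorImages,
      cons_val_zero, cons_val_one, cons_val_two, head_cons, tail_cons] <;>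
    rw [mul_inv_eq_one]
  · rw [quarterTurn_mul_diagUnit_mul_quarterTurn_inv]
    simp only [← map_pow, ← map_inv, ← map_mul]
    congr 1
    group
  · rw [mul_assoc quarterTurn]
    simp only [← map_pow, ← map_inv, ← map_mul]
    rw [quarterTurn_mul_diagUnit_mul_quarterTurn_inv]
    congr 1
    rw [← mul_inv_eq_one, ← ha]
    group

noncomputable def metabelianRep (a : rootsOfUnity 7 K) : FiveTwoGroup →* SL(2, K) :=
  PresentedGroup.toGroup (lift_generatorImages_rels ((mem_rootsOfUnity 7 _).mp a.2))

section Generators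

variable (a : rootsOfUnity 7 K)

lemma metabelianRep_of (i : Fin 3) :
    metabelianRep a (PresentedGroup.of i) = generatorImages (a : Kˣ) i :=
  PresentedGroup.toGroup.of _

@[simp]
lemma coe_metabelianRep_of_zero :
    (metabelianRep a (PresentedGroup.of 0) : Matrix (Fin 2) (Fin 2) K) =
      !![((a : Kˣ) : K), 0; 0, ((a : Kˣ) : K)⁻¹] := by
  simp [metabelianRep_of, generatorImages]

@[simp]
lemma coe_metabelianRep_of_one :
    (metabelianRep a (PresentedGroup.of 1) : Matrix (Fin 2) (Fin 2) K) =
      !![((a : Kˣ) : K) ^ 2, 0; 0, (((a : Kˣ) : K) ^ 2)⁻¹] := by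
  simp [metabelianRep_of, generatorImages, -map_pow]

@[simp]
lemma coe_metabelianRep_of_two :
    (metabelianRep a (PresentedGroup.of 2) : Matrix (Fin 2) (Fin 2) K) = !![0, 1; -1, 0] := by
  simp [metabelianRep_of, generatorImages]

lemma trace_metabelianRep_of_zero :
    trace (metabelianRep a (PresentedGroup.of 0) : Matrix (Fin 2) (Fin 2) K) =
      (a : Kˣ) + ((a : Kˣ) : K)⁻¹ := by
  simp [trace_fin_two]

end Generators

lemma metabelianRep_irreducible {a : rootsOfUnity 7 K} (ha : ((a : Kˣ) : K) ^ 2 ≠ 1)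
    (W : Submodule K (Fin 2 → K)) (hW : Module.finrank K W = 1) :
    ¬ ∀ g, ∀ w ∈ W, (metabelianRep a g : Matrix (Fin 2) (Fin 2) K) *ᵥ w ∈ W := by
  intro hinv
  obtain ⟨v, -, hv0, heigen⟩ := Submodule.exists_common_eigenvector_of_finrank_eq_one hW
  obtain ⟨c, hc⟩ := heigen _ (hinv (PresentedGroup.of 0))
  obtain ⟨d, hd⟩ := heigen _ (hinv (PresentedGroup.of 2))
  rw [coe_metabelianRep_of_zero] at hc
  rw [coe_metabelianRep_of_two] at hd
  have h := eq_of_common_eigenvector_diag_quarterTurn hv0 hc hd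
  exact ha (by rw [sq, mul_eq_one_iff_eq_inv₀ (Units.ne_zero _), ← h])

lemma metabelianRep_not_conj {a b : rootsOfUnity 7 K}
    (hab : ((b : Kˣ) : K) + ((b : Kˣ) : K)⁻¹ ≠ (a : Kˣ) + ((a : Kˣ) : K)⁻¹) :
    ¬ ∃ P : SL(2, K), ∀ g, metabelianRep b g = P * metabelianRep a g * P⁻¹ := by
  rintro ⟨P, hP⟩
  apply hab
  rw [← trace_metabelianRep_of_zero, ← trace_metabelianRep_of_zero, hP (PresentedGroup.of 0),
    trace_coe_conj]

end FiveTwoGroup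

/-- with `ζ₇ = exp(2π√−1/7)`, for each `k ∈ {1,2,3}` there is a
homomorphism `ρₖ` from the Lin-presented `5₂` knot group to `SL(2,ℂ)` with
`ρₖ(x₁) = diag(ζ₇ᵏ, ζ₇⁻ᵏ)`, `ρₖ(x₂) = diag(ζ₇²ᵏ, ζ₇⁻²ᵏ)`, `ρₖ(μ) = [[0,1],[-1,0]]`;
each `ρₖ` is irreducible, and `ρ₁, ρ₂, ρ₃` are pairwise non-conjugate in `SL(2,ℂ)`. -/
theorem stmt15 (ζ : ℂ) (hζ : ζ = Complex.exp (2 * Real.pi * Complex.I / 7)) :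
    ∃ ρ₁ ρ₂ ρ₃ : FiveTwoGroup →* SL2C,
      (∀ k : Fin 3, ∀ ρ : FiveTwoGroup →* SL2C, ρ = [ρ₁, ρ₂, ρ₃].get k →
        ((ρ (PresentedGroup.of (0 : Fin 3)) : Matrix (Fin 2) (Fin 2) ℂ) =
          !![ζ ^ ((k : ℕ) + 1), 0; 0, (ζ ^ ((k : ℕ) + 1))⁻¹]) ∧
        ((ρ (PresentedGroup.of (1 : Fin 3)) : Matrix (Fin 2) (Fin 2) ℂ) =
          !![ζ ^ (2 * ((k : ℕ) + 1)), 0; 0, (ζ ^ (2 * ((k : ℕ) + 1)))⁻¹]) ∧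
        ((ρ (PresentedGroup.of (2 : Fin 3)) : Matrix (Fin 2) (Fin 2) ℂ) =
          !![0, 1; -1, 0]) ∧
        (∀ W : Submodule ℂ (Fin 2 → ℂ), Module.finrank ℂ W = 1 →
          ¬ ∀ g : FiveTwoGroup, ∀ w ∈ W,
              (ρ g : Matrix (Fin 2) (Fin 2) ℂ).mulVec w ∈ W)) ∧
      (¬ ∃ P : SL2C, ∀ g : FiveTwoGroup, ρ₂ g = P * ρ₁ g * P⁻¹) ∧
      (¬ ∃ P : SL2C, ∀ g : FiveTwoGroup, ρ₃ g = P * ρ₁ g * P⁻¹) ∧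
      (¬ ∃ P : SL2C, ∀ g : FiveTwoGroup, ρ₃ g = P * ρ₂ g * P⁻¹) := by
  have hprim : IsPrimitiveRoot ζ 7 :=
    hζ ▸ by simpa using Complex.isPrimitiveRoot_exp 7 (by norm_num)
  let ρ : ℕ → FiveTwoGroup →* SL2C := fun m =>
    FiveTwoGroup.metabelianRep (hprim.toRootsOfUnity ^ (m + 1))
  have hnot_conj : ∀ j k : ℕ, j < k → k < 3 → ¬ ∃ P : SL2C, ∀ g, ρ k g = P * ρ j g * P⁻¹ :=
    fun j k hjk hk => FiveTwoGroup.metabelianRep_not_conj <| by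
      simpa using hprim.pow_add_inv_pow_ne (j := k + 1) (k := j + 1) (by omega) (by omega)
        (by omega) (by omega)
  refine ⟨ρ 0, ρ 1, ρ 2, fun k σ hσ => ?_, hnot_conj 0 1 (by norm_num) (by norm_num),
    hnot_conj 0 2 (by norm_num) (by norm_num), hnot_conj 1 2 (by norm_num) (by norm_num)⟩
  obtain rfl : σ = ρ k := by fin_cases k <;> exact hσ
  refine ⟨by simp [ρ], by simp [ρ, ← pow_mul, mul_comm], by simp [ρ],
    FiveTwoGroup.metabelianRep_irreducible ?_⟩
  simpa [← pow_mul] using hprim.pow_ne_one_of_pos_of_lt (l := (k + 1) * 2) (by omega) (by omega)
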